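/- Let $M$ be an $R$-module and $T \subseteq Spec(M)$ such that every nontrivial submodule of $M$ is a vertex of the Zariski topology-graph $G(\tau_T)$. If the maximum degree $\Delta(G(\tau_T))$ is finite, then the length of $M$ as an $R$-module satisfies $l_R(M) \leq \Delta(G(\tau_T)) + 1$. -/

import Mathlib

/-!
Let `K` be a neighbour of a nontrivial submodule `N`. For a nonzero `L ≤ N` we have
`V(N) ⊆ V(L)`, so `V(K) ∪ V(L) = T`, while `V(L) ⊊ T` because `L` is itself a vertex; hence
`L` is adjacent to `K`. Thus the interval `(0, N]` lies in the neighbourhood of `K` and has at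
most `d` elements. A strict chain `0 = N₀ < ⋯ < Nₙ = M` puts `N₁, …, Nₙ₋₁` into `(0, Nₙ₋₁]`,
so `n - 1 ≤ d`.
-/

open Submodule

section Defs
variable (R : Type*) [CommRing R] {M : Type*} [AddCommGroup M] [Module R M]

/-- `(N : M)`, the colon ideal of a submodule with the whole module. -/
def colonTop (N : Submodule R M) : Ideal R := N.colon ⊤

variable {R}

/-- A prime submodule. -/
def IsPrimeSubmodule (P : Submodule R M) : Prop :=
  P ≠ ⊤ ∧ ∀ (r : R) (m : M), r • m ∈ P → r ∈ colonTop R P ∨ m ∈ P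

/-- The prime spectrum of a module, as a set of submodules. -/
def specSet (R : Type*) [CommRing R] (M : Type*) [AddCommGroup M] [Module R M] :
    Set (Submodule R M) := {P | IsPrimeSubmodule P}

/-- `V(N)`. -/
def Vset (N : Submodule R M) : Set (Submodule R M) :=
  {P | IsPrimeSubmodule P ∧ colonTop R N ≤ colonTop R P}

/-- `V^*(N)`. -/
def VstarSet (N : Submodule R M) : Set (Submodule R M) :=
  {P | IsPrimeSubmodule P ∧ N ≤ P}

/-- The product `NK = (N:M)(K:M)M` of two submodules. -/
def prodSub (N K : Submodule R M) : Submodule R M :=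
  (colonTop R N * colonTop R K) • (⊤ : Submodule R M)

/-- The prime radical of a submodule. -/
def radicalSub (N : Submodule R M) : Submodule R M :=
  sInf {P | IsPrimeSubmodule P ∧ N ≤ P}

/-- Adjacency in the Zariski topology-graph `G(τ_T)`. -/
def ZAdj (T : Set (Submodule R M)) (N L : Submodule R M) : Prop :=
  N ≠ L ∧ N ≠ ⊤ ∧ L ≠ ⊤ ∧ Vset N ∪ Vset L = T ∧ Vset N ≠ T ∧ Vset L ≠ T

/-- Vertices of the Zariski topology-graph `G(τ_T)`. -/
def ZVertex (T : Set (Submodule R M)) (N : Submodule R M) : Prop :=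
  ∃ K, ZAdj T N K

/-- The Zariski topology-graph `G(τ_T)` as a simple graph on its vertex set. -/
def ZGraph (T : Set (Submodule R M)) : SimpleGraph {N : Submodule R M // ZVertex T N} where
  Adj a b := ZAdj T a.1 b.1
  symm := by
    constructor
    rintro a b ⟨h1, h2, h3, h4, h5, h6⟩
    exact ⟨h1.symm, h3, h2, by rwa [Set.union_comm], h6, h5⟩
  loopless := by constructor; rintro a ⟨h1, -⟩; exact h1 rfl

end Defs
section Extra
variable {R : Type*} [CommRing R] {M : Type*} [AddCommGroup M] [Module R M]

/-- Prime submodule of a submodule `W`, internal version (i.e. a prime submodule of the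
module `W`). -/
def IsPrimeIn (W P : Submodule R M) : Prop :=
  P < W ∧ ∀ (r : R) (m : M), m ∈ W → r • m ∈ P → (∀ x ∈ W, r • x ∈ P) ∨ m ∈ P

/-- The prime radical of `N` computed inside the submodule `W`. -/
def radicalIn (W N : Submodule R M) : Submodule R M :=
  sInf {P | IsPrimeIn W P ∧ N ≤ P} ⊓ W

/-- Vertices of the graph `AG(M)^*`. -/
def AGstarVertex (N : Submodule R M) : Prop :=
  N ≠ ⊤ ∧ colonTop R N ≠ Module.annihilator R M ∧
    ∃ K, K ≠ ⊤ ∧ colonTop R K ≠ Module.annihilator R M ∧ prodSub N K = ⊥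

/-- Adjacency in the graph `AG(M)^*`. -/
def AGstarAdj (N L : Submodule R M) : Prop :=
  N ≠ L ∧ AGstarVertex N ∧ AGstarVertex L ∧ prodSub N L = ⊥

/-- The clique number of a graph, valued in `ℕ∞`. -/
noncomputable def cliqueNumE {V : Type*} (G : SimpleGraph V) : ℕ∞ :=
  ⨆ n ∈ {n : ℕ | ∃ s, G.IsNClique n s}, (n : ℕ∞)

end Extra
namespace LTSeries

variable {α : Type*} [Preorder α]

lemma length_le_encard_Ioc (p : LTSeries α) :
    (p.length : ℕ∞) ≤ (Set.Ioc p.head p.last).encard := by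
  have hinj : Function.Injective fun i : Fin p.length => p i.succ :=
    p.strictMono.injective.comp (Fin.succ_injective _)
  calc (p.length : ℕ∞) ≤ (Set.range fun i : Fin p.length => p i.succ).encard := by
        simpa using hinj.encard_range
    _ ≤ (Set.Ioc p.head p.last).encard :=
        Set.encard_le_encard <| Set.range_subset_iff.2 fun i =>
          ⟨p.strictMono (Fin.succ_pos i), p.monotone (Fin.le_last _)⟩

end LTSeries

lemma Order.krullDim_le_of_encard_Ioc_bot_le {α : Type*} [PartialOrder α] [BoundedOrder α]
    (d : ℕ) (h : ∀ a : α, a ≠ ⊤ → (Set.Ioc ⊥ a).encard ≤ d) :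
    Order.krullDim α ≤ (d + 1 : ℕ) := by
  refine iSup_le fun p => ?_
  rcases eq_or_ne p.length 0 with hp | hp
  · rw [hp]; exact_mod_cast Nat.zero_le _
  set q := p.eraseLast
  have hq_top : q.last ≠ ⊤ := (p.eraseLast_last_rel_last hp).ne_top
  have hq : (q.length : ℕ∞) ≤ d :=
    (LTSeries.length_le_encard_Ioc q).trans <|
      (Set.encard_le_encard (Set.Ioc_subset_Ioc_left bot_le)).trans (h _ hq_top)
  have : p.length - 1 ≤ d := by exact_mod_cast hq
  exact_mod_cast (show p.length ≤ d + 1 by omega)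

section ZariskiGraph

variable {R : Type*} [CommRing R] {M : Type*} [AddCommGroup M] [Module R M]
  {T : Set (Submodule R M)} {N K L : Submodule R M}

lemma colonTop_mono (h : N ≤ L) : colonTop R N ≤ colonTop R L :=
  fun _ hr => Submodule.mem_colon.2 fun m hm => h (Submodule.mem_colon.1 hr m hm)

lemma Vset_anti (h : N ≤ L) : Vset L ⊆ Vset N :=
  fun _ hP => ⟨hP.1, (colonTop_mono h).trans hP.2⟩

lemma ZAdj.Vset_subset (h : ZAdj T N K) : Vset N ⊆ T :=
  h.2.2.2.1 ▸ Set.subset_union_left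

lemma ZAdj.of_le (hNK : ZAdj T N K) (hL : ZVertex T L) (hLN : L ≤ N) : ZAdj T K L := by
  obtain ⟨-, -, hK_top, hNK_union, -, hK_ne⟩ := hNK
  obtain ⟨L', hLL'⟩ := hL
  have hLT : Vset L ⊆ T := hLL'.Vset_subset
  obtain ⟨-, hL_top, -, -, hL_ne, -⟩ := hLL'
  have hNL : Vset N ⊆ Vset L := Vset_anti hLN
  have hKL : K ≠ L := by
    rintro rfl
    exact hK_ne (hNK_union ▸ Set.union_eq_self_of_subset_left hNL).symm
  refine ⟨hKL, hK_top, hL_top, ?_, hK_ne, hL_ne⟩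
  refine (Set.union_subset (hNK_union ▸ Set.subset_union_right) hLT).antisymm ?_
  rw [← hNK_union, Set.union_comm]
  exact Set.union_subset_union_right _ hNL

end ZariskiGraph

theorem stmt9_general {R : Type*} [CommRing R] {M : Type*} [AddCommGroup M] [Module R M]
    (T : Set (Submodule R M))
    (hall : ∀ N : Submodule R M, N ≠ ⊥ → N ≠ ⊤ → ZVertex T N)
    (d : ℕ) (hfin : ∀ N : Submodule R M, {L | ZAdj T N L}.Finite)
    (hdeg : ∀ N : Submodule R M, {L | ZAdj T N L}.ncard ≤ d) :
    Order.krullDim (Submodule R M) ≤ (d + 1 : ℕ) := by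
  refine Order.krullDim_le_of_encard_Ioc_bot_le d fun N hN_top => ?_
  rcases eq_or_ne N ⊥ with rfl | hN_bot
  · simp
  obtain ⟨K, hNK⟩ := hall N hN_bot hN_top
  have hsub : Set.Ioc ⊥ N ⊆ {L | ZAdj T K L} := fun L ⟨hL_bot, hLN⟩ =>
    hNK.of_le (hall L hL_bot.ne' (ne_top_of_le_ne_top hN_top hLN)) hLN
  calc (Set.Ioc ⊥ N).encard ≤ {L | ZAdj T K L}.encard := Set.encard_le_encard hsub
    _ = {L | ZAdj T K L}.ncard := (hfin K).cast_ncard_eq.symm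
    _ ≤ d := by exact_mod_cast hdeg K

/-- if every nontrivial submodule of `M` is a vertex of `G(τ_T)` and the
maximum degree is at most `d < ∞`, then the length of `M` (the supremum of lengths of
strict chains of submodules) is at most `d + 1`. -/
theorem stmt9 {R : Type*} [CommRing R] {M : Type*} [AddCommGroup M] [Module R M]
    (T : Set (Submodule R M)) (hT : T.Nonempty)
    (hall : ∀ N : Submodule R M, N ≠ ⊥ → N ≠ ⊤ → ZVertex T N)
    (d : ℕ) (hfin : ∀ N : Submodule R M, {L | ZAdj T N L}.Finite)
    (hdeg : ∀ N : Submodule R M, {L | ZAdj T N L}.ncard ≤ d) :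
    Order.krullDim (Submodule R M) ≤ (d + 1 : ℕ) :=
  stmt9_general T hall d hfin hdeg
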